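/- arXiv:2405.03512 — 4 statements merged into one kernel-verified Lean document; each statement's English description precedes it below -/
import Mathlib

section
/- Let α₁, …, αₙ be a finite sequence of countable ordinals with a unique maximum α₁ (i.e. α₁ > αᵢ for all i ≥ 2). Then the topological disjoint union [0, ω^{α₁}] ⊔ ⋯ ⊔ [0, ω^{αₙ}] is homeomorphic to [0, ω^{α₁}]. -/
/-!
Placing `[0, b]` right after `[0, a]` gives a continuous bijection `[0, a] ⊔ [0, b] → [0, a + 1 + b]`
from a compact space onto a Hausdorff one, hence a homeomorphism. Since `ω ^ c` is additively
principal, `ω ^ b + 1 + ω ^ c = ω ^ c` whenever `b < c`, so `[0, ω ^ c]` absorbs each smaller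
summand `[0, ω ^ b]`; induction over the summands finishes the proof.
-/

open Ordinal

universe u

def Homeomorph.sigmaFinSucc {n : ℕ} (X : Fin (n + 1) → Type*) [∀ i, TopologicalSpace (X i)] :
    (Σ i, X i) ≃ₜ X 0 ⊕ Σ i : Fin n, X i.succ where
  toFun p := Fin.cases (motive := fun i => X i → X 0 ⊕ Σ i : Fin n, X i.succ)
    Sum.inl (fun i x => Sum.inr ⟨i, x⟩) p.1 p.2
  invFun := Sum.elim (Sigma.mk 0) fun q => ⟨q.1.succ, q.2⟩
  left_inv := by
    rintro ⟨i, x⟩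
    cases i using Fin.cases <;> rfl
  right_inv := by
    rintro (x | ⟨i, x⟩) <;> rfl
  continuous_toFun := continuous_sigma fun i => by
    induction i using Fin.cases with
    | zero => exact continuous_inl
    | succ i =>
      simp only [Fin.cases_succ]
      exact continuous_inr.comp continuous_sigmaMk
  continuous_invFun :=
    continuous_sigmaMk.sumElim (continuous_sigma fun _ => continuous_sigmaMk)

namespace Ordinal

instance compactSpace_Iic (a : Ordinal.{u}) : CompactSpace (Set.Iic a) :=
  isCompact_iff_compactSpace.1 (Set.Icc_bot (a := a) ▸ isCompact_Icc)

theorem lt_add_one_add_of_le {a c : Ordinal.{u}} (hc : c ≤ a) (b : Ordinal.{u}) : c < a + 1 + b :=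
  (Order.lt_add_one_iff.2 hc).trans_le le_self_add

noncomputable def iicSumIicHomeomorph (a b : Ordinal.{u}) :
    Set.Iic a ⊕ Set.Iic b ≃ₜ Set.Iic (a + 1 + b) := by
  let f : Set.Iic a ⊕ Set.Iic b → Set.Iic (a + 1 + b) :=
    Sum.elim (Set.inclusion fun x hx => (lt_add_one_add_of_le hx b).le)
      (fun y => ⟨a + 1 + y, Set.mem_Iic.2 (add_le_add_right y.2 _)⟩)
  have hf : Continuous f :=
    (continuous_inclusion _).sumElim
      (((isNormal_add_right _).continuous.comp continuous_subtype_val).subtype_mk _)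
  have hinj : f.Injective := by
    rintro (x | x) (y | y) h <;> simp only [f, Sum.elim_inl, Sum.elim_inr, Subtype.ext_iff] at h
    · exact congrArg Sum.inl (Subtype.ext h)
    · exact absurd h (lt_add_one_add_of_le x.2 y).ne
    · exact absurd h.symm (lt_add_one_add_of_le y.2 x).ne
    · exact congrArg Sum.inr (Subtype.ext (add_left_cancel h))
  have hsurj : f.Surjective := by
    rintro ⟨z, hz⟩
    rcases le_or_gt z a with hza | haz
    · exact ⟨Sum.inl ⟨z, hza⟩, rfl⟩
    · have hsub : a + 1 + (z - (a + 1)) = z :=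
        Ordinal.add_sub_cancel_of_le (Order.add_one_le_of_lt haz)
      refine ⟨Sum.inr ⟨z - (a + 1), ?_⟩, Subtype.ext hsub⟩
      rw [Set.mem_Iic, ← add_le_add_iff_left (a + 1), hsub]
      exact hz
  exact hf.homeoOfEquivCompactToT2 (f := Equiv.ofBijective f ⟨hinj, hsurj⟩)

theorem omega0_opow_add_one_add_omega0_opow {b c : Ordinal.{u}} (h : b < c) :
    ω ^ b + 1 + ω ^ c = ω ^ c := by
  have hbc : ω ^ b < ω ^ c := (opow_lt_opow_iff_right one_lt_omega0).2 h
  have hone : 1 < ω ^ c := (Order.one_le_iff_pos.2 (opow_pos b omega0_pos)).trans_lt hbc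
  exact add_omega0_opow (isPrincipal_add_omega0_opow c hbc hone)

noncomputable def iicOmega0OpowSumHomeomorph {b c : Ordinal.{u}} (h : b < c) :
    Set.Iic (ω ^ b) ⊕ Set.Iic (ω ^ c) ≃ₜ Set.Iic (ω ^ c) :=
  (iicSumIicHomeomorph _ _).trans
    (Homeomorph.setCongr (congrArg Set.Iic (omega0_opow_add_one_add_omega0_opow h)))

noncomputable def sigmaIicOmega0OpowSumHomeomorph :
    ∀ {m : ℕ} (β : Fin m → Ordinal.{u}) {γ : Ordinal.{u}}, (∀ i, β i < γ) →
      (Σ i, Set.Iic (ω ^ β i)) ⊕ Set.Iic (ω ^ γ) ≃ₜ Set.Iic (ω ^ γ)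
  | 0, _, _, _ => Homeomorph.emptySum _ _
  | _ + 1, _, _, h =>
    ((Homeomorph.sigmaFinSucc _).sumCongr (Homeomorph.refl _)).trans <|
      (Homeomorph.sumAssoc _ _ _).trans <|
        ((Homeomorph.refl _).sumCongr
          (sigmaIicOmega0OpowSumHomeomorph _ fun i => h i.succ)).trans <|
          iicOmega0OpowSumHomeomorph (h 0)

end Ordinal

theorem stmt3_general (n : ℕ) (hn : 1 ≤ n) (α : Fin n → Ordinal.{0})
    (hmax : ∀ i : Fin n, i ≠ ⟨0, hn⟩ → α i < α ⟨0, hn⟩) :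
    Nonempty ((Σ i : Fin n, (Set.Iic (omega0 ^ α i))) ≃ₜ (Set.Iic (omega0 ^ α ⟨0, hn⟩))) := by
  obtain ⟨m, rfl⟩ : ∃ m, n = m + 1 := ⟨n - 1, (Nat.succ_pred_eq_of_pos hn).symm⟩
  have htail : ∀ i : Fin m, α i.succ < α 0 := fun i => hmax i.succ (Fin.succ_ne_zero i)
  exact ⟨(Homeomorph.sigmaFinSucc _).trans <| (Homeomorph.sumComm _ _).trans <|
    Ordinal.sigmaIicOmega0OpowSumHomeomorph _ htail⟩

/-- If `α₁ > αᵢ` for all `i ≥ 2` (all countable), then the topological disjoint union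
`[0,ω^{α₁}] ⊔ ⋯ ⊔ [0,ω^{αₙ}]` is homeomorphic to `[0,ω^{α₁}]`, where ordinal intervals
carry the topology induced from the order topology on ordinals. -/
theorem stmt3 (n : ℕ) (hn : 1 ≤ n) (α : Fin n → Ordinal.{0})
    (hcount : ∀ i, (α i).card ≤ Cardinal.aleph0)
    (hmax : ∀ i : Fin n, i ≠ ⟨0, hn⟩ → α i < α ⟨0, hn⟩) :
    Nonempty ((Σ i : Fin n, (Set.Iic (omega0 ^ α i))) ≃ₜ (Set.Iic (omega0 ^ α ⟨0, hn⟩))) :=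
  stmt3_general n hn α hmax
end

section
/- For any countable ordinal α, the one-point compactification of the disjoint union of countably infinitely many copies of the ordinal interval [0, ω^α] is homeomorphic to [0, ω^{α+1}]. -/
open Ordinal Set Filter Topology

/-! Put `V = ω ^ α + 1`, so that `V * ω = ω ^ (α + 1)`. Every ordinal below `V * ω` is uniquely
`V * n + x` with `n : ℕ` and `x ≤ ω ^ α` (division with remainder by `V`), so `(n, x) ↦ V * n + x`
is a continuous bijection from the disjoint union onto `[0, ω ^ (α + 1))`. It tends to
`ω ^ (α + 1)` at infinity because leaving every compact set forces `n → ∞`; sending the point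
at infinity there yields a continuous bijection from a compact space onto a Hausdorff one. -/

namespace OnePoint

variable {X Y : Type*}

theorem elim_bijective {y : Y} {f : X → Y} (hf : Function.Injective f) (hy : range f = {y}ᶜ) :
    Function.Bijective (fun p : OnePoint X ↦ p.elim y f) := by
  have hfy : ∀ x, f x ≠ y := fun x ↦ by simpa [hy] using mem_range_self (f := f) x
  refine ⟨fun p q hpq ↦ ?_, fun z ↦ ?_⟩
  · induction p using OnePoint.rec <;> induction q using OnePoint.rec
    · rfl
    · exact absurd hpq.symm (hfy _)
    · exact absurd hpq (hfy _)
    · exact congrArg _ (hf hpq)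
  · rcases eq_or_ne z y with rfl | hz
    · exact ⟨∞, rfl⟩
    · obtain ⟨x, rfl⟩ : z ∈ range f := by simpa [hy]
      exact ⟨x, rfl⟩

noncomputable def homeomorphOfInjectiveOfRangeEq [TopologicalSpace X] [TopologicalSpace Y]
    [T2Space Y] (y : Y) (f : X → Y) (hf : Continuous f) (hinj : Function.Injective f)
    (hy : range f = {y}ᶜ) (hlim : Tendsto f (coclosedCompact X) (𝓝 y)) : OnePoint X ≃ₜ Y :=
  Continuous.homeoOfEquivCompactToT2 (f := Equiv.ofBijective _ (elim_bijective hinj hy))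
    ((continuous_iff _).2 ⟨hlim, hf⟩)

end OnePoint

theorem tendsto_sigma_fst_coclosedCompact_cofinite {ι : Type*} {X : ι → Type*}
    [∀ i, TopologicalSpace (X i)] [∀ i, CompactSpace (X i)] :
    Tendsto Sigma.fst (coclosedCompact (Σ i, X i)) cofinite := fun s hs ↦
  hasBasis_coclosedCompact.mem_iff.2 ⟨Sigma.fst ⁻¹' sᶜ,
    ⟨isClosed_sigma_iff.2 fun i ↦ isClosed_const (p := i ∈ sᶜ),
      sigma_univ (s := sᶜ) ▸ isCompact_sigma hs fun _ _ ↦ isCompact_univ⟩,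
    by rw [← preimage_compl, compl_compl]⟩

namespace Ordinal

theorem add_one_mul_omega0 {a : Ordinal} (ha : a ≠ 0) : (a + 1) * ω = a * ω := by
  refine le_antisymm ?_ (mul_le_mul_left le_self_add _)
  calc (a + 1) * ω ≤ a * 2 * ω := mul_le_mul_left ?_ _
    _ = a * ω := by rw [mul_assoc, ← Nat.cast_ofNat, mul_omega0 (by simp) (natCast_lt_omega0 2)]
  rw [Ordinal.mul_two]
  exact add_le_add_right (Order.one_le_iff_ne_zero.2 ha) a

theorem mul_natCast_add_lt_mul_omega0 {a b : Ordinal} (n : ℕ) (hb : b < a) : a * n + b < a * ω :=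
  calc a * n + b < a * n + a := add_lt_add_right hb _
    _ = a * (n + 1 : ℕ) := by push_cast; rw [mul_add_one]
    _ ≤ a * ω := mul_le_mul_right (natCast_lt_omega0 _).le a

instance (a : Ordinal) : CompactSpace (Iic a) :=
  isCompact_iff_compactSpace.mp (Icc_bot (a := a) ▸ isCompact_Icc)

theorem mul_add_div_of_lt {a b : Ordinal} (c : Ordinal) (hb : b < a) : (a * c + b) / a = c := by
  rw [mul_add_div c (pos_of_gt hb).ne', div_eq_zero_of_lt hb, add_zero]

theorem mul_add_mod_of_lt {a b : Ordinal} (c : Ordinal) (hb : b < a) : (a * c + b) % a = b := by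
  rw [mul_add_mod_self, mod_eq_of_lt hb]

section SigmaIic

variable (W : Ordinal)

def sigmaIicToIic (p : Σ _ : ℕ, Iic W) : Iic ((W + 1) * ω) :=
  ⟨(W + 1) * p.1 + p.2, (mul_natCast_add_lt_mul_omega0 p.1 (Order.lt_add_one_iff.2 p.2.2)).le⟩

theorem sigmaIicToIic_injective : Function.Injective (sigmaIicToIic W) := by
  rintro ⟨n, x, hx⟩ ⟨m, y, hy⟩ h
  have hx' := Order.lt_add_one_iff.2 (mem_Iic.1 hx)
  have hy' := Order.lt_add_one_iff.2 (mem_Iic.1 hy)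
  have h' : (W + 1) * n + x = (W + 1) * m + y := congrArg Subtype.val h
  obtain rfl : n = m := by
    simpa [mul_add_div_of_lt _ hx', mul_add_div_of_lt _ hy'] using congrArg (· / (W + 1)) h'
  obtain rfl : x = y := by
    simpa [mul_add_mod_of_lt _ hx', mul_add_mod_of_lt _ hy'] using congrArg (· % (W + 1)) h'
  rfl

theorem range_sigmaIicToIic : range (sigmaIicToIic W) = {⊤}ᶜ := by
  refine Set.ext fun b ↦ ⟨?_, fun hb ↦ ?_⟩
  · rintro ⟨⟨n, x, hx⟩, rfl⟩ h
    exact (mul_natCast_add_lt_mul_omega0 n (Order.lt_add_one_iff.2 (mem_Iic.1 hx))).ne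
      (congrArg Subtype.val h)
  · have hb' : b.1 < (W + 1) * ω := Subtype.coe_lt_coe.2 (lt_top_iff_ne_top.2 hb)
    obtain ⟨n, hn⟩ := lt_omega0.1 ((lt_mul_iff_div_lt (by simp)).1 hb')
    refine ⟨⟨n, b.1 % (W + 1), Order.lt_add_one_iff.1 (mod_lt _ (by simp))⟩, Subtype.ext ?_⟩
    simp [sigmaIicToIic, ← hn, div_add_mod]

theorem continuous_sigmaIicToIic : Continuous (sigmaIicToIic W) :=
  continuous_sigma fun n ↦
    ((isNormal_add_right ((W + 1) * n)).continuous.comp continuous_subtype_val).subtype_mk _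

theorem tendsto_sigmaIicToIic :
    Tendsto (sigmaIicToIic W) (coclosedCompact _) (𝓝 ⊤) := by
  refine tendsto_order.2 ⟨fun a ha ↦ ?_, fun b hb ↦ absurd hb (not_lt.2 le_top)⟩
  obtain ⟨c, hc, hac⟩ :=
    (lt_mul_iff_of_isSuccLimit isSuccLimit_omega0).1 (Subtype.coe_lt_coe.2 ha)
  obtain ⟨k, rfl⟩ := lt_omega0.1 hc
  have hk : ∀ᶠ p : Σ _ : ℕ, Iic W in coclosedCompact _, k ≤ p.1 :=
    tendsto_sigma_fst_coclosedCompact_cofinite.eventually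
      (Nat.cofinite_eq_atTop ▸ eventually_ge_atTop k)
  filter_upwards [hk] with p hp
  exact hac.trans_le <| (mul_le_mul_right (by exact_mod_cast hp) _).trans le_self_add

noncomputable def onePointSigmaIicHomeomorph : OnePoint (Σ _ : ℕ, Iic W) ≃ₜ Iic ((W + 1) * ω) :=
  OnePoint.homeomorphOfInjectiveOfRangeEq ⊤ _ (continuous_sigmaIicToIic W)
    (sigmaIicToIic_injective W) (range_sigmaIicToIic W) (tendsto_sigmaIicToIic W)

end SigmaIic

end Ordinal

theorem stmt4_general (α : Ordinal.{0}) :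
    Nonempty (OnePoint (Σ _ : ℕ, (Set.Iic (omega0 ^ α))) ≃ₜ (Set.Iic (omega0 ^ (α + 1)))) := by
  rw [opow_add, opow_one, ← add_one_mul_omega0 (opow_ne_zero α omega0_ne_zero)]
  exact ⟨onePointSigmaIicHomeomorph _⟩

/-- For a countable ordinal `α`, the one-point compactification of the disjoint union
of countably infinitely many copies of `[0, ω^α]` is homeomorphic to `[0, ω^{α+1}]`. -/
theorem stmt4 (α : Ordinal.{0}) (hα : α.card ≤ Cardinal.aleph0) :
    Nonempty (OnePoint (Σ _ : ℕ, (Set.Iic (omega0 ^ α))) ≃ₜ (Set.Iic (omega0 ^ (α + 1)))) :=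
  stmt4_general α
end

section
/- In the ordinal interval [0, ω^α] (for a countable ordinal α ≥ 1), the maximal element ω^α is topologically distinguished: for every other point x ∈ [0, ω^α], every neighborhood U of ω^α, and every neighborhood V of x, the based spaces (U, ω^α) and (V, x) are not homeomorphic as pairs. -/
/-!
The Cantor–Bendixson derivatives `univᵈ[β]` of a space are preserved by homeomorphisms and are
local: if `U` is a neighbourhood of `x`, then `x` lies in the `β`-th derivative of `U` iff it lies
in the `β`-th derivative of the whole space. In a space of ordinals the `β`-th derivative,
for `β ≠ 0`, consists of the nonzero multiples of `ω ^ β`, because the accumulation points of the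
multiples of `a` are the nonzero multiples of `a * ω`. Hence `ω ^ α` lies in the `α`-th
derivative of `U`, whereas no `x < ω ^ α` lies in the `α`-th derivative of `V`.
-/

open Topology Ordinal Set Filter Order CantorBendixson

universe u

section IteratedDerivedSet

variable {X Y : Type u} [TopologicalSpace X] [TopologicalSpace Y] {f : X → Y}

theorem Topology.IsOpenEmbedding.preimage_derivedSet (hf : IsOpenEmbedding f) (s : Set Y) :
    f ⁻¹' derivedSet s = derivedSet (f ⁻¹' s) := by
  ext x
  rw [mem_preimage, mem_derivedSet, mem_derivedSet, ← comap_principal, hf.accPt_comap_iff]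

theorem Topology.IsOpenEmbedding.preimage_iteratedDerivedSet (hf : IsOpenEmbedding f)
    (s : Set Y) (a : Ordinal) : f ⁻¹' sᵈ[a] = (f ⁻¹' s)ᵈ[a] := by
  induction a using Ordinal.limitRecOn with
  | zero => simp only [iteratedDerivedSet_zero]
  | add_one a ih =>
    simp only [iteratedDerivedSet_succ, relDerivedSet_apply, preimage_inter,
      hf.preimage_derivedSet, ih]
  | limit a ha ih =>
    simp only [iteratedDerivedSet_limit ha, preimage_iInter]
    exact iInter_congr fun b => ih b.1 b.2

theorem Topology.IsOpenEmbedding.mem_iteratedDerivedSet_univ_iff (hf : IsOpenEmbedding f)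
    {a : Ordinal} {x : X} : f x ∈ (univ : Set Y)ᵈ[a] ↔ x ∈ (univ : Set X)ᵈ[a] := by
  rw [← mem_preimage, hf.preimage_iteratedDerivedSet, preimage_univ]

theorem mem_iteratedDerivedSet_univ_subtype_iff {U : Set X} {x : U} (hU : U ∈ 𝓝 (x : X))
    {a : Ordinal} : x ∈ (univ : Set U)ᵈ[a] ↔ (x : X) ∈ (univ : Set X)ᵈ[a] := by
  let x' : interior U := ⟨x, mem_interior_iff_mem_nhds.2 hU⟩
  have hincl : IsOpenEmbedding (inclusion interior_subset : interior U → U) :=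
    .inclusion _ (isOpen_interior.preimage continuous_subtype_val)
  exact (hincl.mem_iteratedDerivedSet_univ_iff (x := x')).trans
    (isOpen_interior.isOpenEmbedding_subtypeVal.mem_iteratedDerivedSet_univ_iff (x := x')).symm

end IteratedDerivedSet

theorem derivedSet_diff_singleton {X : Type*} [TopologicalSpace X] [T1Space X] (s : Set X)
    (b : X) : derivedSet (s \ {b}) = derivedSet s := by
  ext x
  simp only [mem_derivedSet, accPt_iff_frequently]
  rcases eq_or_ne x b with rfl | hxb
  · simp only [Set.mem_sdiff, mem_singleton_iff]
    exact frequently_congr (.of_forall fun y => by tauto)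
  · exact frequently_congr ((eventually_ne_nhds hxb).mono fun y hy => by simp [hy])

namespace Ordinal

theorem accPt_setOf_dvd_iff {a y : Ordinal} (ha : a ≠ 0) :
    AccPt y (𝓟 {z | a ∣ z}) ↔ y ≠ 0 ∧ a * ω ∣ y := by
  rw [SuccOrder.accPt_principal, isMin_iff_eq_bot, bot_eq_zero]
  constructor
  · rintro ⟨hy, hacc⟩
    refine ⟨hy, ?_⟩
    have hy_eq : y = a * (y / a) := by
      by_contra hne
      obtain ⟨_, ⟨s, rfl⟩, hlt, hle⟩ := hacc _ ((mul_div_le y a).lt_of_ne' hne)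
      exact hlt.not_ge (mul_le_mul_right ((mul_le_iff_le_div ha).1 hle.le) a)
    have hlim : IsSuccLimit (y / a) := by
      rcases zero_or_succ_or_isSuccLimit (y / a) with h0 | ⟨t, ht⟩ | hlim
      · exact absurd (hy_eq.trans (by rw [h0, mul_zero])) hy
      · rw [← ht] at hy_eq
        obtain ⟨_, ⟨s, rfl⟩, h1, h2⟩ :=
          hacc (a * t) (hy_eq ▸ mul_lt_mul_of_pos_left (lt_succ t) ha.pos)
        rw [hy_eq] at h2
        exact absurd (lt_of_mul_lt_mul_left' h1)
          (le_of_lt_succ (lt_of_mul_lt_mul_left' h2)).not_gt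
      · exact hlim
    obtain ⟨k, hk⟩ := (isSuccPrelimit_iff_omega0_dvd.1 hlim.isSuccPrelimit)
    exact ⟨k, by rw [hy_eq, hk, mul_assoc]⟩
  · rintro ⟨hy, k, rfl⟩
    have hk : k ≠ 0 := by rintro rfl; simp at hy
    have hlim : IsSuccLimit (ω * k) := isSuccLimit_mul_left isSuccLimit_omega0 hk.pos
    refine ⟨hy, fun b hb => ?_⟩
    rw [mul_assoc] at hb ⊢
    obtain ⟨t, ht, hbt⟩ := (lt_mul_iff_of_isSuccLimit hlim).1 hb
    exact ⟨a * (t + 1), dvd_mul_right _ _,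
      hbt.trans (mul_lt_mul_of_pos_left (lt_add_one t) ha.pos),
      mul_lt_mul_of_pos_left (hlim.add_one_lt ht) ha.pos⟩

theorem opow_dvd_iff_of_isSuccLimit {a b y : Ordinal} (ha : a ≠ 0) (hb : IsSuccLimit b) :
    a ^ b ∣ y ↔ ∀ c < b, a ^ c ∣ y := by
  refine ⟨fun h c hc => (opow_dvd_opow a hc.le).trans h, fun h => ?_⟩
  by_contra hndvd
  have hr : y % a ^ b ≠ 0 := fun h0 => hndvd (dvd_of_mod_eq_zero h0)
  obtain ⟨c, hcb, hrc⟩ := (lt_opow_of_isSuccLimit ha hb).1 (mod_lt y (opow_ne_zero b ha))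
  have hdvd : a ^ c ∣ y % a ^ b := by
    rw [← dvd_add_iff ((opow_dvd_opow a hcb.le).mul_right (y / a ^ b)), div_add_mod]
    exact h c hcb
  exact hrc.not_ge (le_of_dvd hr hdvd)

theorem mem_iteratedDerivedSet_univ_iff {β : Ordinal.{u}} (hβ : β ≠ 0) {y : Ordinal.{u}} :
    y ∈ (Set.univ : Set Ordinal.{u})ᵈ[lift.{u + 1} β] ↔ y ≠ 0 ∧ ω ^ β ∣ y := by
  induction β using limitRecOn generalizing y with
  | zero => exact absurd rfl hβ
  | add_one β ih =>
    have hdiff : (Set.univ : Set Ordinal.{u})ᵈ[lift.{u + 1} β] \ {0} = {z | ω ^ β ∣ z} \ {0} := by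
      rcases eq_or_ne β 0 with rfl | hβ0
      · simp
      · ext z
        simp only [Set.mem_sdiff, mem_singleton_iff, mem_ofPred_eq, ih hβ0]
        tauto
    rw [lift_add_one, iteratedDerivedSet_succ,
      (isClosed_iteratedDerivedSet isClosed_univ _).relDerivedSet_eq,
      ← derivedSet_diff_singleton _ 0, hdiff, derivedSet_diff_singleton, mem_derivedSet,
      accPt_setOf_dvd_iff (opow_ne_zero _ omega0_ne_zero), opow_add_one]
  | limit β hlim ih =>
    have hlevels : (∀ b : Iio (lift.{u + 1} β), y ∈ (Set.univ : Set Ordinal.{u})ᵈ[b]) ↔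
        ∀ c < β, y ∈ (Set.univ : Set Ordinal.{u})ᵈ[lift.{u + 1} c] := by
      refine ⟨fun h c hc => h ⟨lift c, lift_lt.2 hc⟩, ?_⟩
      rintro h ⟨b, hb⟩
      obtain ⟨c, hc, rfl⟩ := lt_lift_iff.1 hb
      exact h c hc
    rw [iteratedDerivedSet_limit (isSuccLimit_lift.2 hlim), mem_iInter, hlevels,
      opow_dvd_iff_of_isSuccLimit omega0_ne_zero hlim]
    have hone := one_lt_of_isSuccLimit hlim
    constructor
    · intro h
      refine ⟨((ih 1 hone one_ne_zero).1 (h 1 hone)).1, fun c hc => ?_⟩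
      rcases eq_or_ne c 0 with rfl | hc0
      · simp
      · exact ((ih c hc hc0).1 (h c hc)).2
    · rintro ⟨hy, h⟩ c hc
      rcases eq_or_ne c 0 with rfl | hc0
      · simp
      · exact (ih c hc hc0).2 ⟨hy, h c hc⟩

theorem mem_iteratedDerivedSet_univ_Iic_iff {c β : Ordinal.{u}} (hβ : β ≠ 0) {y : Iic c} :
    y ∈ (Set.univ : Set (Iic c))ᵈ[lift.{u + 1} β] ↔ (y : Ordinal) ≠ 0 ∧ ω ^ β ∣ y := by
  have hIic : IsOpen (Iic c) := Iio_succ c ▸ isOpen_Iio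
  rw [← mem_iteratedDerivedSet_univ_iff hβ,
    hIic.isOpenEmbedding_subtypeVal.mem_iteratedDerivedSet_univ_iff]

end Ordinal

theorem stmt8_general (α : Ordinal.{0}) (h1 : 1 ≤ α)
    (x : Set.Iic (omega0 ^ α)) (hx : (x : Ordinal.{0}) ≠ omega0 ^ α)
    (U V : Set (Set.Iic (omega0 ^ α)))
    (hU : U ∈ 𝓝 (⟨omega0 ^ α, Set.self_mem_Iic⟩ : Set.Iic (omega0 ^ α))) (hV : V ∈ 𝓝 x)
    (e : U ≃ₜ V) :
    (e ⟨⟨omega0 ^ α, Set.self_mem_Iic⟩, mem_of_mem_nhds hU⟩ : Set.Iic (omega0 ^ α)) ≠ x := by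
  intro hcon
  have hα : α ≠ 0 := one_le_iff_ne_zero.1 h1
  have htop : (⟨⟨ω ^ α, self_mem_Iic⟩, mem_of_mem_nhds hU⟩ : U) ∈ (Set.univ : Set U)ᵈ[lift α] :=
    (mem_iteratedDerivedSet_univ_subtype_iff hU).2
      ((mem_iteratedDerivedSet_univ_Iic_iff hα).2 ⟨opow_ne_zero _ omega0_ne_zero, dvd_rfl⟩)
  have himage := e.isOpenEmbedding.mem_iteratedDerivedSet_univ_iff.2 htop
  have hxmem : x ∈ (Set.univ : Set (Iic (ω ^ α)))ᵈ[lift α] :=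
    hcon ▸ (mem_iteratedDerivedSet_univ_subtype_iff (hcon ▸ hV)).1 himage
  obtain ⟨hx0, hdvd⟩ := (mem_iteratedDerivedSet_univ_Iic_iff hα).1 hxmem
  exact hx (le_antisymm x.2 (le_of_dvd hx0 hdvd))

/-- In `[0, ω^α]` (with `1 ≤ α` countable), the maximal point `ω^α` is topologically
distinguished: for any other point `x`, any neighbourhood `U` of `ω^α` and any
neighbourhood `V` of `x`, there is no homeomorphism of pairs `(U, ω^α) ≅ (V, x)`. -/
theorem stmt8 (α : Ordinal.{0}) (h1 : 1 ≤ α) (h2 : α.card ≤ Cardinal.aleph0)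
    (x : Set.Iic (omega0 ^ α)) (hx : (x : Ordinal.{0}) ≠ omega0 ^ α)
    (U V : Set (Set.Iic (omega0 ^ α)))
    (hU : U ∈ 𝓝 (⟨omega0 ^ α, Set.self_mem_Iic⟩ : Set.Iic (omega0 ^ α))) (hV : V ∈ 𝓝 x)
    (e : U ≃ₜ V) :
    (e ⟨⟨omega0 ^ α, Set.self_mem_Iic⟩, mem_of_mem_nhds hU⟩ : Set.Iic (omega0 ^ α)) ≠ x :=
  stmt8_general α h1 x hx U V hU hV e
end

section
/- There exists a bijection υ : ℕ → ℤ × ℕ such that υ(0) = (0,0) and for every n ∈ ℕ, υ(n) and υ(n+1) are at ℓ¹-distance 1 from each other (i.e. |υ(n+1).1 − υ(n).1| + |υ(n+1).2 − υ(n).2| = 1). -/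
def snakeK (x : ℤ) (y : ℕ) : ℤ := (max x.natAbs y : ℕ)

def idxZ (x : ℤ) (y : ℕ) : ℤ :=
  snakeK x y * (2 * snakeK x y - 1) +
    (if snakeK x y % 2 = 1 then
      (if x = snakeK x y then (y : ℤ)
       else if (y : ℤ) = snakeK x y then 2 * snakeK x y - x
       else 4 * snakeK x y - y)
    else
      (if x = -snakeK x y then (y : ℤ)
       else if (y : ℤ) = snakeK x y then 2 * snakeK x y + x
       else 4 * snakeK x y - y))

def snakeIdx (z : ℤ × ℕ) : ℕ := (idxZ z.1 z.2).toNat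

def snakeStep (z : ℤ × ℕ) : ℤ × ℕ :=
  if snakeK z.1 z.2 % 2 = 1 then
    if z.1 = snakeK z.1 z.2 ∧ (z.2 : ℤ) < snakeK z.1 z.2 then (z.1, z.2 + 1)
    else if (z.2 : ℤ) = snakeK z.1 z.2 ∧ -snakeK z.1 z.2 < z.1 then (z.1 - 1, z.2)
    else if z.1 = -snakeK z.1 z.2 ∧ 0 < z.2 then (z.1, z.2 - 1)
    else (-(snakeK z.1 z.2 + 1), 0)
  else
    if z.1 = -snakeK z.1 z.2 ∧ (z.2 : ℤ) < snakeK z.1 z.2 then (z.1, z.2 + 1)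
    else if (z.2 : ℤ) = snakeK z.1 z.2 ∧ z.1 < snakeK z.1 z.2 then (z.1 + 1, z.2)
    else if z.1 = snakeK z.1 z.2 ∧ 0 < z.2 then (z.1, z.2 - 1)
    else (snakeK z.1 z.2 + 1, 0)

lemma idxZ_eq_of (x : ℤ) (y : ℕ) (k : ℤ) (hk : snakeK x y = k) :
    idxZ x y = k * (2 * k - 1) +
    (if k % 2 = 1 then
      (if x = k then (y : ℤ) else if (y : ℤ) = k then 2*k - x else 4*k - y)
    else
      (if x = -k then (y : ℤ) else if (y : ℤ) = k then 2*k + x else 4*k - y)) := by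
  rw [← hk]; rfl

lemma snakeK_def (x : ℤ) (y : ℕ) : snakeK x y = ((max x.natAbs y : ℕ) : ℤ) := rfl

lemma idxZ_bounds (x : ℤ) (y : ℕ) :
    snakeK x y * (2 * snakeK x y - 1) ≤ idxZ x y ∧
    idxZ x y ≤ snakeK x y * (2 * snakeK x y - 1) + 4 * snakeK x y := by
  have e1 := snakeK_def x y
  set k := snakeK x y with hkdef
  rw [idxZ_eq_of _ _ k hkdef.symm]
  set B := k * (2 * k - 1) with hB
  clear_value B
  constructor <;> · split_ifs <;> omega

lemma snakeK_nonneg (x : ℤ) (y : ℕ) : 0 ≤ snakeK x y := by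
  rw [snakeK_def]; positivity

lemma base_nonneg {k : ℤ} (hk : 0 ≤ k) : 0 ≤ k * (2 * k - 1) := by
  rcases hk.eq_or_lt with h | h
  · simp [← h]
  · nlinarith

lemma idxZ_nonneg (x : ℤ) (y : ℕ) : 0 ≤ idxZ x y := by
  have h := (idxZ_bounds x y).1
  have := base_nonneg (snakeK_nonneg x y)
  omega

lemma base_mono {a b : ℤ} (ha : 0 ≤ a) (h : a < b) :
    a * (2 * a - 1) + 4 * a < b * (2 * b - 1) := by nlinarith

lemma idxZ_inj : ∀ x1 y1 x2 y2, idxZ x1 y1 = idxZ x2 y2 → x1 = x2 ∧ y1 = y2 := by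
  intro x1 y1 x2 y2 h
  have hk1 := snakeK_nonneg x1 y1
  have hk2 := snakeK_nonneg x2 y2
  have hb1 := idxZ_bounds x1 y1
  have hb2 := idxZ_bounds x2 y2
  have hkeq : snakeK x1 y1 = snakeK x2 y2 := by
    rcases lt_trichotomy (snakeK x1 y1) (snakeK x2 y2) with hlt | heq | hgt
    · have := base_mono hk1 hlt; omega
    · exact heq
    · have := base_mono hk2 hgt; omega
  have e1 := snakeK_def x1 y1
  have e2 := snakeK_def x2 y2
  rw [hkeq] at e1
  set k := snakeK x2 y2 with hkdef
  rw [idxZ_eq_of x1 y1 k hkeq, idxZ_eq_of x2 y2 k hkdef.symm] at h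
  set B := k * (2 * k - 1) with hB
  clear_value B
  constructor <;> · split_ifs at h <;> omega

lemma idxZ_step (z : ℤ × ℕ) :
    idxZ (snakeStep z).1 (snakeStep z).2 = idxZ z.1 z.2 + 1 := by
  obtain ⟨x, y⟩ := z
  have e1 := snakeK_def x y
  set k := snakeK x y with hkdef
  have hq : (k + 1) * (2 * (k + 1) - 1) = k * (2 * k - 1) + 4 * k + 1 := by ring
  show idxZ (snakeStep (x, y)).1 (snakeStep (x, y)).2 = idxZ x y + 1
  unfold snakeStep
  simp only [← hkdef]
  split_ifs with h1 h2 h3 h4 h5 h6 h7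
  · -- odd, right column up: (x, y+1)
    have hk2 : snakeK x (y + 1) = k := by rw [snakeK_def]; omega
    rw [idxZ_eq_of _ _ k hk2, idxZ_eq_of x y k hkdef.symm]
    set B := k * (2 * k - 1); clear_value B
    push_cast
    split_ifs <;> omega
  · -- odd, top leftwards: (x-1, y)
    have hk2 : snakeK (x - 1) y = k := by rw [snakeK_def]; omega
    rw [idxZ_eq_of _ _ k hk2, idxZ_eq_of x y k hkdef.symm]
    set B := k * (2 * k - 1); clear_value B
    split_ifs <;> omega
  · -- odd, left column down: (x, y-1)
    have hk2 : snakeK x (y - 1) = k := by rw [snakeK_def]; omega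
    rw [idxZ_eq_of _ _ k hk2, idxZ_eq_of x y k hkdef.symm]
    set B := k * (2 * k - 1); clear_value B
    split_ifs <;> omega
  · -- odd, layer change: (-(k+1), 0)
    have hk2 : snakeK (-(k + 1)) 0 = k + 1 := by rw [snakeK_def]; omega
    rw [idxZ_eq_of _ _ (k + 1) hk2, idxZ_eq_of x y k hkdef.symm, hq]
    set B := k * (2 * k - 1); clear_value B
    split_ifs <;> omega
  · have hk2 : snakeK x (y + 1) = k := by rw [snakeK_def]; omega
    rw [idxZ_eq_of _ _ k hk2, idxZ_eq_of x y k hkdef.symm]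
    set B := k * (2 * k - 1); clear_value B
    split_ifs <;> omega
  · have hk2 : snakeK (x + 1) y = k := by rw [snakeK_def]; omega
    rw [idxZ_eq_of _ _ k hk2, idxZ_eq_of x y k hkdef.symm]
    set B := k * (2 * k - 1); clear_value B
    split_ifs <;> omega
  · have hk2 : snakeK x (y - 1) = k := by rw [snakeK_def]; omega
    rw [idxZ_eq_of _ _ k hk2, idxZ_eq_of x y k hkdef.symm]
    set B := k * (2 * k - 1); clear_value B
    split_ifs <;> omega
  · have hk2 : snakeK (k + 1) 0 = k + 1 := by rw [snakeK_def]; omega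
    rw [idxZ_eq_of _ _ (k + 1) hk2, idxZ_eq_of x y k hkdef.symm, hq]
    set B := k * (2 * k - 1); clear_value B
    split_ifs <;> omega

lemma snakeStep_dist (z : ℤ × ℕ) :
    |(snakeStep z).1 - z.1| + |((snakeStep z).2 : ℤ) - (z.2 : ℤ)| = 1 := by
  obtain ⟨x, y⟩ := z
  have e1 := snakeK_def x y
  set k := snakeK x y with hkdef
  show |(snakeStep (x, y)).1 - x| + |((snakeStep (x, y)).2 : ℤ) - (y : ℤ)| = 1
  unfold snakeStep
  simp only [← hkdef]
  split_ifs with h1 h2 h3 h4 h5 h6 h7 <;>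
    · simp only [Int.abs_eq_natAbs]
      omega

lemma snakeIdx_step (z : ℤ × ℕ) : snakeIdx (snakeStep z) = snakeIdx z + 1 := by
  have h := idxZ_step z
  have h1 := idxZ_nonneg z.1 z.2
  have h2 := idxZ_nonneg (snakeStep z).1 (snakeStep z).2
  unfold snakeIdx
  omega

lemma snakeIdx_bij : Function.Bijective snakeIdx := by
  constructor
  · intro z1 z2 h
    have h1 := idxZ_nonneg z1.1 z1.2
    have h2 := idxZ_nonneg z2.1 z2.2
    unfold snakeIdx at h
    have : idxZ z1.1 z1.2 = idxZ z2.1 z2.2 := by omega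
    obtain ⟨hx, hy⟩ := idxZ_inj _ _ _ _ this
    exact Prod.ext hx hy
  · intro n
    induction n with
    | zero => exact ⟨(0, 0), rfl⟩
    | succ n ih =>
        obtain ⟨z, hz⟩ := ih
        exact ⟨snakeStep z, by rw [snakeIdx_step, hz]⟩

noncomputable def snakeEquiv : ℤ × ℕ ≃ ℕ := Equiv.ofBijective snakeIdx snakeIdx_bij

/-- There is a "snake" bijection `υ : ℕ ≃ ℤ × ℕ` with `υ 0 = (0,0)` and consecutive
values at ℓ¹-distance 1. -/
theorem stmt9 : ∃ υ : ℕ ≃ ℤ × ℕ, υ 0 = (0, 0) ∧ ∀ n : ℕ,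
    |(υ (n + 1)).1 - (υ n).1| + |((υ (n + 1)).2 : ℤ) - ((υ n).2 : ℤ)| = 1 := by
  refine ⟨snakeEquiv.symm, ?_, ?_⟩
  · rw [Equiv.symm_apply_eq]
    rfl
  · intro n
    have key : snakeEquiv.symm (n + 1) = snakeStep (snakeEquiv.symm n) := by
      apply snakeEquiv.injective
      rw [Equiv.apply_symm_apply]
      have : snakeEquiv (snakeStep (snakeEquiv.symm n)) = snakeIdx (snakeStep (snakeEquiv.symm n)) := rfl
      rw [this, snakeIdx_step]
      congr 1
      exact (Equiv.apply_symm_apply snakeEquiv n).symm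
    rw [key]
    exact snakeStep_dist _
end
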